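/- Let G = (V, E) be a directed acyclic graph and let s, t ∈ V. Let S be a minimum-cardinality identifying set for X^path_{G,s,t} and let S' be a minimum-cardinality identifying set for X^flow_{G,s,t}. Then |S'| ≤ (|S| + 1)·|S| / 2. -/

import Mathlib

/-- The list of consecutive arcs of a list of vertices. -/
def arcsOf {V : Type*} (l : List V) : List (V × V) := l.zip l.tail

/-- `l` is (the vertex list of) a simple directed path from `u` to `v`
using only arcs from `A`. -/
def IsPathOn {V : Type*} (A : Set (V × V)) (u v : V) (l : List V) : Prop :=
  l.Nodup ∧ l.head? = some u ∧ l.getLast? = some v ∧ ∀ p ∈ arcsOf l, p ∈ A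

/-- The incidence vector of (the arc set of) a path given by vertex list `l`. -/
def pathVec {V : Type*} [DecidableEq V] (l : List V) : (V × V) → ℝ :=
  fun p => if p ∈ arcsOf l then 1 else 0

/-- `X^path`: the set of incidence vectors of simple `s`-`t`-paths in the digraph
with arc set `A`. -/
def XPath {V : Type*} [DecidableEq V] (A : Set (V × V)) (s t : V) :
    Set ((V × V) → ℝ) :=
  {x | ∃ l : List V, IsPathOn A s t l ∧ x = pathVec l}

/-- `X^flow`: the set of nonnegative `s`-`t`-flows of value 1 in the digraph with
arc set `A` (flows vanish outside `A`, and every node has the appropriate excess). -/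
def XFlow {V : Type*} [Fintype V] [DecidableEq V] (A : Set (V × V)) (s t : V) :
    Set ((V × V) → ℝ) :=
  {x | (∀ p, 0 ≤ x p) ∧ (∀ p, p ∉ A → x p = 0) ∧
    ∀ v, (∑ w, x (v, w)) - (∑ u, x (u, v)) =
      if v = s then 1 else if v = t then -1 else 0}

/-- `S` is identifying for `X`: any two distinct members of `X` differ on some arc in `S`. -/
def Identifying {V : Type*} (X : Set ((V × V) → ℝ)) (S : Set (V × V)) : Prop :=
  ∀ x ∈ X, ∀ y ∈ X, x ≠ y → ∃ e ∈ S, x e ≠ y e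

/-- The digraph with arc set `A` is acyclic: it has no directed cycle. -/
def IsAcyclicDigraph {V : Type*} (A : Set (V × V)) : Prop :=
  ¬ ∃ (a : V) (l : List V), (a :: l).Nodup ∧
      ∀ p ∈ arcsOf (a :: (l ++ [a])), p ∈ A

/-!
Fix a topological numbering `τ` of the DAG. A flow of value 1 decomposes into path vectors, so
differences of flows lie in the span `W` of differences of path vectors, and `dim W` suitably
chosen arcs already identify the flows.

To bound `dim W`, cut each `s`-`t`-path at its arcs in `S`. Splicing the stretch of one path
between two common vertices into another path gives again an `s`-`t`-path, as the graph is
acyclic; if both stretches carry the same arcs of `S`, the spliced path agrees with the other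
one on `S`, hence equals it. So the piece between two consecutive cuts depends only on the two
cuts, and every path vector is the sum of the pieces of its consecutive cuts. Shifting the
pieces by a potential (the piece from `s` to a cut) removes the pairs starting at `s`; what
remains lives on pairs of cuts from `S ∪ {t}` ordered by `τ`, of which there are at most
`(|S| + 1) |S| / 2`.
-/

open Module

section ArcLists

variable {α : Type*}

@[simp] theorem arcsOf_nil : arcsOf ([] : List α) = [] := rfl

@[simp] theorem arcsOf_singleton (a : α) : arcsOf [a] = [] := rfl

@[simp] theorem arcsOf_cons_cons (a b : α) (l : List α) :
    arcsOf (a :: b :: l) = (a, b) :: arcsOf (b :: l) := rfl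

theorem mem_of_mem_arcsOf {l : List α} {e : α × α} (h : e ∈ arcsOf l) : e.1 ∈ l ∧ e.2 ∈ l :=
  ⟨(List.of_mem_zip h).1, List.mem_of_mem_tail (List.of_mem_zip h).2⟩

theorem arcsOf_map {β : Type*} (f : α → β) (l : List α) :
    arcsOf (l.map f) = (arcsOf l).map (Prod.map f f) := by
  unfold arcsOf
  rw [← List.map_tail, List.zip_map]

theorem arcsOf_append_cons (p : List α) (u : α) (r : List α) :
    arcsOf (p ++ u :: r) = arcsOf (p ++ [u]) ++ arcsOf (u :: r) := by
  induction p with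
  | nil => simp
  | cons a p ih => cases p <;> simp_all

theorem isChain_iff_forall_mem_arcsOf {R : α → α → Prop} {l : List α} :
    l.IsChain R ↔ ∀ e ∈ arcsOf l, R e.1 e.2 := by
  induction l using List.twoStepInduction with
  | nil => simp
  | singleton a => simp
  | cons_cons a b l _ ih => simp [List.isChain_cons_cons, ih b]

theorem pairwise_arcsOf {R : α → α → Prop} {l : List α} (hl : l.Pairwise R) :
    (arcsOf l).Pairwise fun e f => R e.1 f.1 := by
  induction l using List.twoStepInduction with
  | nil => simp
  | singleton a => simp
  | cons_cons a b l _ ih =>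
    rw [List.pairwise_cons] at hl
    rw [arcsOf_cons_cons, List.pairwise_cons]
    exact ⟨fun e he => hl.1 _ (mem_of_mem_arcsOf he).1, ih b hl.2⟩

theorem sum_arcsOf_sub {M : Type*} [AddCommGroup M] (φ : α → M) (a b : α) (l : List α) :
    ((arcsOf (a :: (l ++ [b]))).map fun e => φ e.1 - φ e.2).sum = φ a - φ b := by
  induction l generalizing a with
  | nil => simp
  | cons c l ih =>
    rw [List.cons_append, arcsOf_cons_cons, List.map_cons, List.sum_cons, ih]
    abel

theorem sum_arcsOf_cons {M : Type*} [AddCommGroup M] (g : α → α → M) (a b : α) (l : List α) :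
    ((arcsOf (a :: (l ++ [b]))).map fun e => g e.1 e.2).sum =
      g a b + ((arcsOf (l ++ [b])).map fun e => g e.1 e.2 + g a e.1 - g a e.2).sum := by
  cases l with
  | nil => simp
  | cons c l =>
    have h := sum_arcsOf_sub (g a) c b l
    simp only [List.cons_append, arcsOf_cons_cons, List.map_cons, List.sum_cons,
      add_sub_assoc, List.sum_map_add] at h ⊢
    rw [h]
    abel

end ArcLists

section Rank

variable {V : Type*} {A : Set (V × V)}

theorem IsAcyclicDigraph.not_isChain_cycle (hA : IsAcyclicDigraph A) (a : V) (l : List V)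
    (hl : (a :: (l ++ [a])).IsChain fun u v => (u, v) ∈ A) : False := by
  induction hn : l.length using Nat.strong_induction_on generalizing a l with
  | _ n ih =>
  by_cases hnd : (a :: l).Nodup
  · exact hA ⟨a, l, hnd, isChain_iff_forall_mem_arcsOf.mp hl⟩
  -- a repeated vertex `x` cuts out a shorter closed walk through `x`
  obtain ⟨x, hx⟩ := not_forall.mp (mt List.nodup_iff_sublist.mpr hnd)
  obtain ⟨L₁, L₂, hsplit, hx₁, hx₂⟩ :=
    List.append_sublist_iff.mp (show List.Sublist ([x] ++ [x]) (a :: l) from not_not.mp hx)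
  obtain ⟨p, q, rfl⟩ := List.append_of_mem (List.singleton_sublist.mp hx₁)
  obtain ⟨q', r, rfl⟩ := List.append_of_mem (List.singleton_sublist.mp hx₂)
  have hinfix : x :: (q ++ q' ++ [x]) <:+: a :: (l ++ [a]) :=
    ⟨p, r ++ [a], by rw [show a :: (l ++ [a]) = (a :: l) ++ [a] from rfl, hsplit]; simp⟩
  refine ih (q ++ q').length ?_ x (q ++ q') (hl.infix hinfix) rfl
  have := congrArg List.length hsplit
  simp only [List.length_cons, List.length_append] at this ⊢
  omega

theorem IsAcyclicDigraph.not_transGen (hA : IsAcyclicDigraph A) (v : V) :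
    ¬ Relation.TransGen (fun u w => (u, w) ∈ A) v v := by
  intro h
  obtain ⟨b, hvb, hbv⟩ := Relation.TransGen.head'_iff.mp h
  obtain ⟨l, hl, hlast⟩ := List.exists_isChain_cons_of_relationReflTransGen hbv
  have hwalk : b :: l = (b :: l).dropLast ++ [v] := by
    rw [← hlast, List.dropLast_append_getLast]
  apply hA.not_isChain_cycle v (b :: l).dropLast
  rw [← hwalk]
  exact List.IsChain.cons_cons hvb hl

/-- Counting the vertices from which `v` is reachable gives a topological numbering. -/
theorem IsAcyclicDigraph.exists_rank [Fintype V] (hA : IsAcyclicDigraph A) :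
    ∃ τ : V → ℕ, ∀ e ∈ A, τ e.1 < τ e.2 := by
  classical
  let R : V → V → Prop := fun u w => (u, w) ∈ A
  refine ⟨fun v => (Finset.univ.filter fun w => Relation.TransGen R w v).card, fun e he => ?_⟩
  refine Finset.card_lt_card ((Finset.ssubset_iff_of_subset ?_).mpr ⟨e.1, ?_, ?_⟩)
  · intro w
    simpa using fun hw => hw.tail he
  · simpa using Relation.TransGen.single he
  · simpa using hA.not_transGen e.1

end Rank

section SortedLists

variable {α β : Type*} [Preorder β] {f : α → β} {l : List α} {a w : α}

theorem le_of_mem_of_head?_eq (hl : l.Pairwise (f · < f ·)) (ha : l.head? = some a)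
    (hw : w ∈ l) : f a ≤ f w := by
  obtain ⟨l, rfl⟩ := List.head?_eq_some_iff.mp ha
  rcases List.mem_cons.mp hw with rfl | hw
  · rfl
  · exact (List.rel_of_pairwise_cons hl hw).le

theorem le_of_mem_of_getLast?_eq (hl : l.Pairwise (f · < f ·)) (ha : l.getLast? = some a)
    (hw : w ∈ l) : f w ≤ f a := by
  obtain ⟨l, rfl⟩ := List.getLast?_eq_some_iff.mp ha
  rcases List.mem_append.mp hw with hw | hw
  · exact (List.pairwise_append.mp hl).2.2 w hw a (List.mem_singleton_self a) |>.le
  · rw [List.mem_singleton.mp hw]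

theorem eq_of_mem_arcsOf_of_le_of_lt (hL : L.Pairwise (f · < f ·)) (hxy : (x, y) ∈ arcsOf L)
    (hz : z ∈ L) (hxz : f x ≤ f z) (hzy : f z < f y) : z = x := by
  induction L using List.twoStepInduction with
  | nil => simp at hxy
  | singleton a => simp at hxy
  | cons_cons a b L _ ih =>
    have hb : ∀ w ∈ b :: L, f b ≤ f w := fun w hw =>
      le_of_mem_of_head?_eq (List.pairwise_cons.mp hL).2 rfl hw
    rw [arcsOf_cons_cons, List.mem_cons, Prod.mk.injEq] at hxy
    rcases hxy with ⟨rfl, rfl⟩ | hxy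
    · rcases List.mem_cons.mp hz with rfl | hz
      · rfl
      · exact absurd hzy (hb z hz).not_gt
    · rcases List.mem_cons.mp hz with rfl | hz
      · exact absurd hxz (List.rel_of_pairwise_cons hL (mem_of_mem_arcsOf hxy).1).not_ge
      · exact ih b (List.pairwise_cons.mp hL).2 hxy hz

end SortedLists

section Paths

variable {V : Type*} {A : Set (V × V)} {τ : V → ℕ} {s t u : V} {l l₁ l₂ : List V}

theorem pairwise_rank_lt (hτ : ∀ e ∈ A, τ e.1 < τ e.2) (hl : ∀ e ∈ arcsOf l, e ∈ A) :
    l.Pairwise (τ · < τ ·) := by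
  have : (l.map τ).IsChain (· < ·) :=
    (List.isChain_map τ).mpr (isChain_iff_forall_mem_arcsOf.mpr fun e he => hτ e (hl e he))
  exact List.pairwise_map.mp (List.isChain_iff_pairwise.mp this)

theorem IsPathOn.pairwise (hτ : ∀ e ∈ A, τ e.1 < τ e.2) (h : IsPathOn A s t l) :
    l.Pairwise (τ · < τ ·) :=
  pairwise_rank_lt hτ h.2.2.2

theorem IsPathOn.of_forall_mem_arcsOf (hτ : ∀ e ∈ A, τ e.1 < τ e.2) (hs : l.head? = some s)
    (ht : l.getLast? = some t) (hl : ∀ e ∈ arcsOf l, e ∈ A) : IsPathOn A s t l :=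
  ⟨(pairwise_rank_lt hτ hl).imp fun h heq => h.ne (congrArg τ heq), hs, ht, hl⟩

theorem IsPathOn.rank_lt (hτ : ∀ e ∈ A, τ e.1 < τ e.2) (h : IsPathOn A s t l) (hst : s ≠ t) :
    τ s < τ t := by
  obtain ⟨l, rfl⟩ := List.head?_eq_some_iff.mp h.2.1
  rcases List.mem_cons.mp (List.mem_of_mem_getLast? h.2.2.1) with ht | ht
  · exact absurd ht.symm hst
  · exact List.rel_of_pairwise_cons (h.pairwise hτ) ht

theorem IsPathOn.pathVec_eq_zero [DecidableEq V] (h : IsPathOn A s t l) {e : V × V}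
    (he : e ∉ A) : pathVec l e = 0 :=
  if_neg fun hl => he (h.2.2.2 e hl)

theorem pathVec_cons_cons [DecidableEq V] {a b : V} (h : (a :: b :: l).Nodup) :
    pathVec (a :: b :: l) = Pi.single (a, b) 1 + pathVec (b :: l) := by
  have hab : (a, b) ∉ arcsOf (b :: l) := fun hab =>
    (List.nodup_cons.mp h).1 (mem_of_mem_arcsOf hab).1
  funext e
  by_cases he : e = (a, b)
  · subst he
    simp [pathVec, hab]
  · simp [pathVec, he]

theorem mem_arcsOf_append_cons_iff (hτ : ∀ e ∈ A, τ e.1 < τ e.2) {p r : List V}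
    (hl : ∀ e ∈ arcsOf (p ++ u :: r), e ∈ A) (e : V × V) :
    e ∈ arcsOf (p ++ u :: r) ↔
      if τ e.1 < τ u then e ∈ arcsOf (p ++ [u]) else e ∈ arcsOf (u :: r) := by
  have hsorted := pairwise_rank_lt hτ hl
  rw [arcsOf_append_cons] at hl ⊢
  have below : e ∈ arcsOf (p ++ [u]) → τ e.1 < τ u := fun he =>
    (hτ e (hl e (List.mem_append_left _ he))).trans_le
      (le_of_mem_of_getLast?_eq (hsorted.sublist (by simp)) (by simp) (mem_of_mem_arcsOf he).2)
  have above : e ∈ arcsOf (u :: r) → τ u ≤ τ e.1 := fun he =>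
    le_of_mem_of_head?_eq (hsorted.sublist (by simp)) rfl (mem_of_mem_arcsOf he).1
  rw [List.mem_append]
  split_ifs with h
  · exact ⟨fun h' => h'.resolve_right fun he => (above he).not_gt h, Or.inl⟩
  · exact ⟨fun h' => h'.resolve_left fun he => h (below he), Or.inr⟩

theorem IsPathOn.exists_splice [DecidableEq V] (hτ : ∀ e ∈ A, τ e.1 < τ e.2)
    (h₁ : IsPathOn A s t l₁) (h₂ : IsPathOn A s t l₂) (hu₁ : u ∈ l₁) (hu₂ : u ∈ l₂) :
    ∃ l, IsPathOn A s t l ∧ (∀ w ∈ l₂, τ u ≤ τ w → w ∈ l) ∧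
      pathVec l = fun e => if τ e.1 < τ u then pathVec l₁ e else pathVec l₂ e := by
  obtain ⟨p₁, r₁, rfl⟩ := List.append_of_mem hu₁
  obtain ⟨p₂, r₂, rfl⟩ := List.append_of_mem hu₂
  have hA : ∀ e ∈ arcsOf (p₁ ++ u :: r₂), e ∈ A := by
    intro e he
    rw [arcsOf_append_cons, List.mem_append] at he
    rcases he with he | he
    · exact h₁.2.2.2 e (by rw [arcsOf_append_cons]; exact List.mem_append_left _ he)
    · exact h₂.2.2.2 e (by rw [arcsOf_append_cons]; exact List.mem_append_right _ he)
  refine ⟨p₁ ++ u :: r₂, IsPathOn.of_forall_mem_arcsOf hτ ?_ ?_ hA, ?_, ?_⟩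
  · rw [← h₁.2.1]
    cases p₁ <;> rfl
  · rw [← h₂.2.2.1, List.getLast?_append_cons, List.getLast?_append_cons]
  · intro w hw huw
    rcases List.mem_append.mp hw with hw | hw
    · exact absurd huw (not_le.mpr ((List.pairwise_append.mp (h₂.pairwise hτ)).2.2 w hw u
        (List.mem_cons_self ..)))
    · exact List.mem_append_right _ hw
  · funext e
    simp only [pathVec, mem_arcsOf_append_cons_iff hτ hA, mem_arcsOf_append_cons_iff hτ h₁.2.2.2,
      mem_arcsOf_append_cons_iff hτ h₂.2.2.2]
    split_ifs <;> rfl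

end Paths

section Windows

variable {V : Type*} {A : Set (V × V)} {τ : V → ℕ} {s t u v w : V} {l₁ l₂ : List V}

/-- For `u`, `v` on a path, the arcs of the path in the window are those from `u` to `v`. -/
def window (τ : V → ℕ) (u v : V) : Set (V × V) := {e | τ u ≤ τ e.1 ∧ τ e.1 < τ v}

theorem indicator_window_add {M : Type*} [AddMonoid M] (g : (V × V) → M)
    (huv : τ u ≤ τ v) (hvw : τ v ≤ τ w) :
    (window τ u v).indicator g + (window τ v w).indicator g = (window τ u w).indicator g := by
  funext e
  simp only [Pi.add_apply, Set.indicator_apply, window, Set.mem_ofPred_eq]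
  split_ifs <;> first | omega | simp

theorem sum_indicator_window {M : Type*} [AddCommMonoid M] (g : (V × V) → M) (a b : V)
    (l : List V) (hl : (a :: (l ++ [b])).Pairwise (τ · ≤ τ ·)) :
    ((arcsOf (a :: (l ++ [b]))).map fun e => (window τ e.1 e.2).indicator g).sum =
      (window τ a b).indicator g := by
  induction l generalizing a with
  | nil => simp
  | cons c l ih =>
    rw [List.cons_append, arcsOf_cons_cons, List.map_cons, List.sum_cons,
      ih c (List.pairwise_cons.mp hl).2]
    refine indicator_window_add g (List.rel_of_pairwise_cons hl (by simp)) ?_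
    exact List.rel_of_pairwise_cons (List.pairwise_cons.mp hl).2 (by simp)

theorem indicator_window_pathVec_eq [DecidableEq V] {S : Set (V × V)}
    (hτ : ∀ e ∈ A, τ e.1 < τ e.2) (hid : Identifying (XPath A s t) S)
    (h₁ : IsPathOn A s t l₁) (h₂ : IsPathOn A s t l₂) (hu₁ : u ∈ l₁) (hu₂ : u ∈ l₂)
    (hv₁ : v ∈ l₁) (hv₂ : v ∈ l₂) (huv : τ u ≤ τ v)
    (hS : ∀ e ∈ S, e ∈ window τ u v → pathVec l₁ e = pathVec l₂ e) :
    (window τ u v).indicator (pathVec l₁) = (window τ u v).indicator (pathVec l₂) := by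
  obtain ⟨l', h', hv', hl'⟩ := h₁.exists_splice hτ h₂ hu₁ hu₂
  obtain ⟨l'', h'', -, hl''⟩ := h'.exists_splice hτ h₁ (hv' v hv₂ huv) hv₁
  -- `l''` follows `l₂` inside the window and `l₁` outside it, so it agrees with `l₁` on `S`
  have hin : ∀ e ∈ window τ u v, pathVec l'' e = pathVec l₂ e := by
    rintro e ⟨hue, hev⟩
    simp [hl'', hl', hev, not_lt.mpr hue]
  have hout : ∀ e ∉ window τ u v, pathVec l'' e = pathVec l₁ e := by
    intro e he
    simp only [window, Set.mem_ofPred_eq, not_and_or, not_le, not_lt] at he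
    simp only [hl'', hl']
    split_ifs <;> first | rfl | omega
  have heq : pathVec l'' = pathVec l₁ := by
    by_contra hne
    obtain ⟨e, he, hne⟩ := hid _ ⟨l'', h'', rfl⟩ _ ⟨l₁, h₁, rfl⟩ hne
    by_cases hw : e ∈ window τ u v
    · exact hne ((hin e hw).trans (hS e he hw).symm)
    · exact hne (hout e hw)
  funext e
  by_cases hw : e ∈ window τ u v
  · simp [Set.indicator_of_mem hw, ← hin e hw, heq]
  · simp [Set.indicator_of_notMem hw]

end Windows

section CutSequence

variable {V : Type*} [DecidableEq V] {A : Set (V × V)} {τ : V → ℕ} {S : Finset (V × V)}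
  {s t : V} {l : List V}

/-- A cut is a vertex where the path is cut together with the arc of `S` leaving it there
(`none` at the two ends). -/
def cutSeq (S : Finset (V × V)) (s t : V) (l : List V) : List (V × Option (V × V)) :=
  (s, none) :: (((arcsOf l).filter (· ∈ S)).map (fun a => (a.1, some a)) ++ [(t, none)])

theorem mem_cutSeq {z : V × Option (V × V)} :
    z ∈ cutSeq S s t l ↔
      z = (s, none) ∨ (∃ a ∈ arcsOf l, a ∈ S ∧ (a.1, some a) = z) ∨ z = (t, none) := by
  simp [cutSeq, and_assoc]

theorem IsPathOn.fst_mem_of_mem_cutSeq (h : IsPathOn A s t l) {z : V × Option (V × V)}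
    (hz : z ∈ cutSeq S s t l) : z.1 ∈ l := by
  rcases mem_cutSeq.mp hz with rfl | ⟨a, ha, -, rfl⟩ | rfl
  · exact List.mem_of_mem_head? h.2.1
  · exact (mem_of_mem_arcsOf ha).1
  · exact List.mem_of_mem_getLast? h.2.2.1

theorem IsPathOn.pairwise_tail_cutSeq (hτ : ∀ e ∈ A, τ e.1 < τ e.2) (h : IsPathOn A s t l) :
    (cutSeq S s t l).tail.Pairwise (τ ·.1 < τ ·.1) := by
  refine List.pairwise_append.mpr ⟨?_, by simp, ?_⟩
  · exact List.pairwise_map.mpr ((pairwise_arcsOf (h.pairwise hτ)).sublist List.filter_sublist)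
  · simp only [List.mem_map, List.mem_filter, List.mem_singleton]
    rintro _ ⟨a, ⟨ha, -⟩, rfl⟩ _ rfl
    exact (hτ a (h.2.2.2 a ha)).trans_le
      (le_of_mem_of_getLast?_eq (h.pairwise hτ) h.2.2.1 (mem_of_mem_arcsOf ha).2)

theorem IsPathOn.pairwise_cutSeq (hτ : ∀ e ∈ A, τ e.1 < τ e.2) (h : IsPathOn A s t l) :
    (cutSeq S s t l).Pairwise (τ ·.1 ≤ τ ·.1) := by
  refine List.pairwise_cons.mpr ⟨fun z hz => ?_, (h.pairwise_tail_cutSeq hτ).imp le_of_lt⟩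
  exact le_of_mem_of_head?_eq (h.pairwise hτ) h.2.1
    (h.fst_mem_of_mem_cutSeq (List.mem_cons_of_mem _ hz))

theorem IsPathOn.sum_indicator_window_cutSeq (hτ : ∀ e ∈ A, τ e.1 < τ e.2)
    (h : IsPathOn A s t l) :
    ((arcsOf (cutSeq S s t l)).map fun p => (window τ p.1.1 p.2.1).indicator (pathVec l)).sum =
      pathVec l := by
  have hcuts : (cutSeq S s t l).map Prod.fst =
      s :: ((((arcsOf l).filter (· ∈ S)).map fun a => a.1) ++ [t]) := by
    simp [cutSeq, Function.comp_def]
  have hsorted : ((cutSeq S s t l).map Prod.fst).Pairwise (τ · ≤ τ ·) :=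
    List.pairwise_map.mpr (h.pairwise_cutSeq hτ)
  rw [hcuts] at hsorted
  have := sum_indicator_window (pathVec l) s t _ hsorted
  rw [← hcuts, arcsOf_map, List.map_map] at this
  refine this.trans (Set.indicator_eq_self.mpr fun e he => ?_)
  have he : e ∈ arcsOf l := by
    by_contra hne
    exact he (by simp [pathVec, hne])
  exact ⟨le_of_mem_of_head?_eq (h.pairwise hτ) h.2.1 (mem_of_mem_arcsOf he).1,
    (hτ e (h.2.2.2 e he)).trans_le
      (le_of_mem_of_getLast?_eq (h.pairwise hτ) h.2.2.1 (mem_of_mem_arcsOf he).2)⟩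

theorem IsPathOn.pathVec_of_mem_window (hτ : ∀ e ∈ A, τ e.1 < τ e.2) (h : IsPathOn A s t l)
    {x y : V × Option (V × V)} (hxy : (x, y) ∈ arcsOf (cutSeq S s t l)) {e : V × V}
    (he : e ∈ S) (hw : e ∈ window τ x.1 y.1) :
    pathVec l e = if x.2 = some e then 1 else 0 := by
  have hx := (mem_of_mem_arcsOf hxy).1
  by_cases hxe : x.2 = some e
  · rcases mem_cutSeq.mp hx with rfl | ⟨a, ha, -, rfl⟩ | rfl
    · simp at hxe
    · cases Option.some.inj hxe
      simp [pathVec, ha]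
    · simp at hxe
  · simp only [pathVec, hxe, if_false, ite_eq_right_iff, one_ne_zero, imp_false]
    intro hel
    have hez : (e.1, some e) ∈ (cutSeq S s t l).tail := by
      simp [cutSeq, hel, he]
    have hsorted := h.pairwise_tail_cutSeq (S := S) hτ
    obtain ⟨c, T, hT⟩ : ∃ c T, (cutSeq S s t l).tail = c :: T :=
      List.exists_cons_of_ne_nil (by simp [cutSeq])
    have hcut : cutSeq S s t l = (s, none) :: c :: T := by
      rw [← hT]
      rfl
    rw [hcut, arcsOf_cons_cons, List.mem_cons, ← hT] at hxy
    rcases hxy with hxy | hxy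
    · cases hxy
      rw [hT] at hsorted hez
      exact absurd hw.2 (not_lt.mpr (le_of_mem_of_head?_eq (f := fun z => τ z.1) hsorted rfl hez))
    · rw [← eq_of_mem_arcsOf_of_le_of_lt (f := fun z => τ z.1) hsorted hxy hez hw.1 hw.2] at hxe
      exact hxe rfl

end CutSequence

theorem card_filter_lt_le_choose_two {α β : Type*} [DecidableEq α] [LinearOrder β]
    (N : Finset α) (f : α → β) :
    ((N ×ˢ N).filter fun p => f p.1 < f p.2).card ≤ N.card.choose 2 := by
  rw [← Finset.card_powersetCard]
  refine Finset.card_le_card_of_injOn (fun p => {p.1, p.2}) ?_ ?_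
  · rintro ⟨a, b⟩ hp
    simp only [Finset.coe_filter, Finset.mem_product, Set.mem_ofPred_eq] at hp
    simp [Finset.mem_powersetCard, Finset.insert_subset_iff, hp.1.1, hp.1.2,
      Finset.card_pair (ne_of_apply_ne f hp.2.ne)]
  · rintro ⟨a, b⟩ hp ⟨c, d⟩ hq hpq
    simp only [Finset.coe_filter, Finset.mem_product, Set.mem_ofPred_eq] at hp hq
    have hpq : ({a, b} : Set α) = {c, d} := by
      rw [← Finset.coe_pair, ← Finset.coe_pair]
      exact congrArg _ hpq
    rcases Set.pair_eq_pair_iff.mp hpq with ⟨rfl, rfl⟩ | ⟨rfl, rfl⟩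
    · rfl
    · exact absurd (hp.2.trans hq.2) (lt_irrefl _)

section Pieces

variable {V : Type*} [DecidableEq V] {A : Set (V × V)} {τ : V → ℕ} {S : Finset (V × V)}
  {s t : V} {l : List V}

open Classical in
/-- The piece between consecutive cuts `x`, `y`, read off some `s`-`t`-path having them (`0` if
there is none); by `IsPathOn.indicator_window_eq_cutPiece` any such path gives the same piece. -/
noncomputable def cutPiece (τ : V → ℕ) (A : Set (V × V)) (S : Finset (V × V)) (s t : V)
    (x y : V × Option (V × V)) : (V × V) → ℝ :=
  if h : ∃ l, IsPathOn A s t l ∧ (x, y) ∈ arcsOf (cutSeq S s t l) then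
    (window τ x.1 y.1).indicator (pathVec h.choose)
  else 0

theorem IsPathOn.indicator_window_eq_cutPiece (hτ : ∀ e ∈ A, τ e.1 < τ e.2)
    (hid : Identifying (XPath A s t) S) (h : IsPathOn A s t l) {x y : V × Option (V × V)}
    (hxy : (x, y) ∈ arcsOf (cutSeq S s t l)) :
    (window τ x.1 y.1).indicator (pathVec l) = cutPiece τ A S s t x y := by
  have hex : ∃ l, IsPathOn A s t l ∧ (x, y) ∈ arcsOf (cutSeq S s t l) := ⟨l, h, hxy⟩
  obtain ⟨h', hxy'⟩ := hex.choose_spec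
  rw [cutPiece, dif_pos hex]
  have hx := mem_of_mem_arcsOf hxy
  have hx' := mem_of_mem_arcsOf hxy'
  refine indicator_window_pathVec_eq hτ hid h h' (h.fst_mem_of_mem_cutSeq hx.1)
    (h'.fst_mem_of_mem_cutSeq hx'.1) (h.fst_mem_of_mem_cutSeq hx.2)
    (h'.fst_mem_of_mem_cutSeq hx'.2)
    (isChain_iff_forall_mem_arcsOf.mp (h.pairwise_cutSeq hτ).isChain _ hxy) fun e he hw => ?_
  rw [h.pathVec_of_mem_window hτ hxy he hw, h'.pathVec_of_mem_window hτ hxy' he hw]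

theorem IsPathOn.pathVec_eq_sum_cutPiece (hτ : ∀ e ∈ A, τ e.1 < τ e.2)
    (hid : Identifying (XPath A s t) S) (h : IsPathOn A s t l) :
    pathVec l = ((arcsOf (cutSeq S s t l)).map fun p => cutPiece τ A S s t p.1 p.2).sum := by
  conv_lhs => rw [← h.sum_indicator_window_cutSeq hτ (S := S)]
  exact congrArg List.sum (List.map_congr_left fun p hp => h.indicator_window_eq_cutPiece hτ hid hp)

/-- Shifting each piece by the potential `cutPiece τ A S s t (s, none)` cancels the first piece of
every path, so only pairs of cuts after `(s, none)` remain. -/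
theorem IsPathOn.pathVec_sub_cutPiece_eq_sum (hτ : ∀ e ∈ A, τ e.1 < τ e.2)
    (hid : Identifying (XPath A s t) S) (h : IsPathOn A s t l) :
    pathVec l - cutPiece τ A S s t (s, none) (t, none) =
      ((arcsOf (cutSeq S s t l).tail).map fun p => cutPiece τ A S s t p.1 p.2 +
        cutPiece τ A S s t (s, none) p.1 - cutPiece τ A S s t (s, none) p.2).sum := by
  rw [h.pathVec_eq_sum_cutPiece hτ hid, cutSeq, sum_arcsOf_cons, List.tail_cons,
    add_sub_cancel_left]

theorem finrank_vectorSpan_XPath_le (hτ : ∀ e ∈ A, τ e.1 < τ e.2)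
    (hid : Identifying (XPath A s t) S) :
    finrank ℝ (vectorSpan ℝ (XPath A s t)) ≤ (S.card + 1).choose 2 := by
  classical
  set seg := cutPiece τ A S s t
  let N : Finset (V × Option (V × V)) := insert (t, none) (S.image fun a => (a.1, some a))
  let I := (N ×ˢ N).filter fun p => τ p.1.1 < τ p.2.1
  let D := I.image fun p => seg p.1 p.2 + seg (s, none) p.1 - seg (s, none) p.2
  have hmem : ∀ l, IsPathOn A s t l →
      pathVec l - seg (s, none) (t, none) ∈ Submodule.span ℝ (D : Set ((V × V) → ℝ)) := by
    intro l h
    rw [h.pathVec_sub_cutPiece_eq_sum hτ hid]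
    refine list_sum_mem fun d hd => ?_
    obtain ⟨p, hp, rfl⟩ := List.mem_map.mp hd
    refine Submodule.subset_span (Finset.mem_coe.mpr (Finset.mem_image_of_mem _ ?_))
    have hN : ∀ z ∈ (cutSeq S s t l).tail, z ∈ N := by
      intro z hz
      have : z = (t, none) ∨ ∃ a ∈ arcsOf l, a ∈ S ∧ (a.1, some a) = z := by
        simpa [cutSeq, and_assoc, or_comm] using hz
      rcases this with rfl | ⟨a, -, ha, rfl⟩
      · exact Finset.mem_insert_self _ _
      · exact Finset.mem_insert_of_mem (Finset.mem_image_of_mem _ ha)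
    simp only [I, Finset.mem_filter, Finset.mem_product]
    exact ⟨⟨hN _ (mem_of_mem_arcsOf hp).1, hN _ (mem_of_mem_arcsOf hp).2⟩,
      isChain_iff_forall_mem_arcsOf.mp (h.pairwise_tail_cutSeq hτ).isChain p hp⟩
  have hle : vectorSpan ℝ (XPath A s t) ≤ Submodule.span ℝ (D : Set ((V × V) → ℝ)) := by
    rw [vectorSpan_def, Submodule.span_le]
    rintro _ ⟨_, ⟨l₁, h₁, rfl⟩, _, ⟨l₂, h₂, rfl⟩, rfl⟩
    simpa using Submodule.sub_mem _ (hmem l₁ h₁) (hmem l₂ h₂)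
  calc finrank ℝ (vectorSpan ℝ (XPath A s t))
      ≤ finrank ℝ (Submodule.span ℝ (D : Set ((V × V) → ℝ))) := Submodule.finrank_mono hle
    _ ≤ D.card := finrank_span_finset_le_card D
    _ ≤ I.card := Finset.card_image_le
    _ ≤ N.card.choose 2 := card_filter_lt_le_choose_two N fun z => τ z.1
    _ ≤ (S.card + 1).choose 2 :=
      Nat.choose_le_choose 2 <|
        (Finset.card_insert_le _ _).trans (by simpa using Finset.card_image_le)

end Pieces

section Flows

variable {V : Type*} [Fintype V] {A : Set (V × V)} {τ : V → ℕ} {s t : V} {c : ℝ} {x : (V × V) → ℝ}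
  {l : List V}

def netOutflow : ((V × V) → ℝ) →ₗ[ℝ] (V → ℝ) where
  toFun x v := ∑ w, x (v, w) - ∑ u, x (u, v)
  map_add' x y := by
    funext v
    simp only [Pi.add_apply, Finset.sum_add_distrib]
    ring
  map_smul' a x := by
    funext v
    simp only [Pi.smul_apply, smul_eq_mul, ← Finset.mul_sum, RingHom.id_apply]
    ring

theorem netOutflow_apply (x : (V × V) → ℝ) (v : V) :
    netOutflow x v = ∑ w, x (v, w) - ∑ u, x (u, v) := rfl

theorem sum_mul_netOutflow (φ : V → ℝ) (x : (V × V) → ℝ) :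
    ∑ v, φ v * netOutflow x v = ∑ e, x e * (φ e.1 - φ e.2) := by
  simp only [netOutflow_apply, mul_sub, Finset.mul_sum, Fintype.sum_prod_type,
    Finset.sum_sub_distrib]
  rw [Finset.sum_comm (f := fun v u => φ v * x (u, v))]
  simp only [mul_comm]

variable [DecidableEq V]

def stExcess (s t : V) : V → ℝ := fun v => if v = s then 1 else if v = t then -1 else 0

def IsFlow (A : Set (V × V)) (s t : V) (c : ℝ) (x : (V × V) → ℝ) : Prop :=
  (∀ e, 0 ≤ x e) ∧ (∀ e ∉ A, x e = 0) ∧ netOutflow x = c • stExcess s t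

theorem mem_XFlow_iff : x ∈ XFlow A s t ↔ IsFlow A s t 1 x := by
  simp only [XFlow, IsFlow, Set.mem_ofPred_eq, one_smul, funext_iff, netOutflow_apply, stExcess]

theorem sum_mul_stExcess (φ : V → ℝ) (hst : s ≠ t) : ∑ v, φ v * stExcess s t v = φ s - φ t := by
  simp [stExcess, mul_ite, Finset.sum_ite, Finset.filter_eq', Finset.filter_ne', hst.symm,
    sub_eq_add_neg]

theorem IsFlow.eq_zero (hτ : ∀ e ∈ A, τ e.1 < τ e.2) (hx : IsFlow A s t 0 x) : x = 0 := by
  obtain ⟨hnn, hA, hnet⟩ := hx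
  have hdrop : ∀ e ∈ A, (τ e.1 : ℝ) - τ e.2 < 0 := fun e he =>
    sub_neg.mpr (Nat.cast_lt.mpr (hτ e he))
  have hterm : ∀ e ∈ Finset.univ, x e * ((τ e.1 : ℝ) - τ e.2) ≤ 0 := fun e _ => by
    by_cases he : e ∈ A
    · exact mul_nonpos_of_nonneg_of_nonpos (hnn e) (hdrop e he).le
    · simp [hA e he]
  have hsum : ∑ e, x e * ((τ e.1 : ℝ) - τ e.2) = 0 := by
    simpa [hnet] using (sum_mul_netOutflow (fun v => (τ v : ℝ)) x).symm
  funext e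
  by_cases he : e ∈ A
  · simpa [(hdrop e he).ne] using
      (Finset.sum_eq_zero_iff_of_nonpos hterm).mp hsum e (Finset.mem_univ e)
  · exact hA e he

theorem IsFlow.value_nonneg (hτ : ∀ e ∈ A, τ e.1 < τ e.2) (hx : IsFlow A s t c x)
    (hst : τ s < τ t) : 0 ≤ c := by
  have hne : s ≠ t := fun h => (h ▸ hst).false
  have hsum : ∑ e, x e * ((τ e.1 : ℝ) - τ e.2) ≤ 0 := by
    refine Finset.sum_nonpos fun e _ => ?_
    by_cases he : e ∈ A
    · exact mul_nonpos_of_nonneg_of_nonpos (hx.1 e) (sub_nonpos.mpr (Nat.cast_le.mpr (hτ e he).le))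
    · simp [hx.2.1 e he]
  rw [← sum_mul_netOutflow (fun v => (τ v : ℝ)), hx.2.2] at hsum
  simp only [Pi.smul_apply, smul_eq_mul, mul_left_comm _ c, ← Finset.mul_sum,
    sum_mul_stExcess _ hne] at hsum
  have : (τ s : ℝ) < τ t := Nat.cast_lt.mpr hst
  nlinarith

theorem IsFlow.value_eq_zero (hx : IsFlow A s s c x) : c = 0 := by
  have hs : stExcess s s = Pi.single s 1 := by
    funext v
    by_cases hv : v = s <;> simp [stExcess, hv]
  simpa [hx.2.2, hs, ← Finset.mul_sum] using sum_mul_netOutflow (fun _ => 1) x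

theorem netOutflow_single (a b : V) :
    netOutflow (Pi.single (a, b) 1) = Pi.single a 1 - Pi.single b 1 := by
  funext v
  simp [netOutflow_apply, Pi.single_apply, Prod.ext_iff, ite_and]

theorem netOutflow_pathVec (a : V) (l : List V) (h : (a :: l).Nodup) :
    netOutflow (pathVec (a :: l)) =
      Pi.single a 1 - Pi.single ((a :: l).getLast (List.cons_ne_nil a l)) 1 := by
  induction l generalizing a with
  | nil =>
    have : pathVec [a] = 0 := by funext e; simp [pathVec]
    simp [this]
  | cons b l ih =>
    rw [pathVec_cons_cons h, map_add, netOutflow_single, ih b (List.nodup_cons.mp h).2,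
      List.getLast_cons_cons]
    abel

theorem IsPathOn.isFlow (h : IsPathOn A s t l) (hst : s ≠ t) : IsFlow A s t 1 (pathVec l) := by
  refine ⟨fun e => by unfold pathVec; split_ifs <;> norm_num, fun e he => h.pathVec_eq_zero he, ?_⟩
  obtain ⟨l, rfl⟩ := List.head?_eq_some_iff.mp h.2.1
  have ht : (s :: l).getLast (List.cons_ne_nil s l) = t := by
    simpa [List.getLast?_eq_some_getLast] using h.2.2.1
  rw [netOutflow_pathVec s l h.1, ht, one_smul]
  funext v
  by_cases hvs : v = s
  · simp [stExcess, hvs, hst]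
  · by_cases hvt : v = t <;> simp [stExcess, hvs, hvt, hst.symm]

theorem IsFlow.mem_of_pos (hx : IsFlow A s t c x) {e : V × V} (he : 0 < x e) : e ∈ A := by
  by_contra h
  exact he.ne' (hx.2.1 e h)

theorem IsFlow.sum_out_eq (hx : IsFlow A s t c x) (v : V) :
    ∑ w, x (v, w) = ∑ u, x (u, v) + c * stExcess s t v := by
  have := congrFun hx.2.2 v
  rw [netOutflow_apply, Pi.smul_apply, smul_eq_mul] at this
  linarith

theorem IsFlow.exists_walk (hτ : ∀ e ∈ A, τ e.1 < τ e.2) (hx : IsFlow A s t c x) (hc : 0 ≤ c)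
    (v : V) (hv : v = t ∨ 0 < ∑ w, x (v, w)) :
    ∃ l, l.head? = some v ∧ l.getLast? = some t ∧ ∀ e ∈ arcsOf l, 0 < x e := by
  have : IsTrans V fun w v => τ v < τ w := ⟨fun _ _ _ h₁ h₂ => h₂.trans h₁⟩
  have : Std.Irrefl fun w v : V => τ v < τ w := ⟨fun _ => lt_irrefl _⟩
  induction v using (Finite.wellFounded_of_trans_of_irrefl fun w v : V => τ v < τ w).induction
    with
  | _ v ih =>
  rcases hv with rfl | hout
  · exact ⟨[v], rfl, rfl, by simp⟩
  obtain ⟨w, -, hvw⟩ := Finset.exists_lt_of_sum_lt (f := fun _ => (0 : ℝ)) (by simpa using hout)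
  have hw : w = t ∨ 0 < ∑ u, x (w, u) := by
    refine or_iff_not_imp_left.mpr fun hwt => ?_
    have hin : x (v, w) ≤ ∑ u, x (u, w) :=
      Finset.single_le_sum (fun u _ => hx.1 (u, w)) (Finset.mem_univ v)
    rw [hx.sum_out_eq w]
    simp only [stExcess, hwt, if_false]
    split_ifs <;> nlinarith
  obtain ⟨l, hl, ht, hpos⟩ := ih w (hτ _ (hx.mem_of_pos hvw)) hw
  obtain ⟨l, rfl⟩ := List.head?_eq_some_iff.mp hl
  refine ⟨v :: w :: l, rfl, by simpa [List.getLast?_cons] using ht, ?_⟩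
  rintro e (he | he)
  · exact hvw
  · exact hpos e (by assumption)

theorem IsFlow.exists_path (hτ : ∀ e ∈ A, τ e.1 < τ e.2) (hx : IsFlow A s t c x) (hc : 0 < c) :
    ∃ l, IsPathOn A s t l ∧ ∀ e ∈ arcsOf l, 0 < x e := by
  have hs : s = t ∨ 0 < ∑ w, x (s, w) := by
    refine or_iff_not_imp_left.mpr fun hst => ?_
    rw [hx.sum_out_eq s]
    simp only [stExcess, if_true]
    have := Finset.sum_nonneg fun u (_ : u ∈ Finset.univ) => hx.1 (u, s)
    linarith
  obtain ⟨l, hl, ht, hpos⟩ := hx.exists_walk hτ hc.le s hs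
  exact ⟨l, IsPathOn.of_forall_mem_arcsOf hτ hl ht fun e he => hx.mem_of_pos (hpos e he), hpos⟩

theorem IsFlow.sub_smul_pathVec (hx : IsFlow A s t c x) (hl : IsPathOn A s t l) (hst : s ≠ t)
    {μ : ℝ} (hμ : ∀ e ∈ arcsOf l, μ ≤ x e) : IsFlow A s t (c - μ) (x - μ • pathVec l) := by
  refine ⟨fun e => ?_, fun e he => ?_, ?_⟩
  · by_cases he : e ∈ arcsOf l
    · simpa [pathVec, he] using hμ e he
    · simpa [pathVec, he] using hx.1 e
  · simp [hx.2.1 e he, hl.pathVec_eq_zero he]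
  · rw [map_sub, map_smul, hx.2.2, (hl.isFlow hst).2.2, one_smul, sub_smul]

/-- Flow decomposition: peel off a path, weighted by the least flow on its arcs. -/
theorem IsFlow.sub_smul_mem_vectorSpan (hτ : ∀ e ∈ A, τ e.1 < τ e.2) (hx : IsFlow A s t c x)
    {p : (V × V) → ℝ} (hp : p ∈ XPath A s t) : x - c • p ∈ vectorSpan ℝ (XPath A s t) := by
  obtain ⟨l₀, hl₀, rfl⟩ := hp
  induction hn : (Finset.univ.filter fun e => x e ≠ 0).card using Nat.strong_induction_on
    generalizing x c with
  | _ n ih =>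
  by_cases hc0 : c = 0
  · subst hc0
    simp [hx.eq_zero hτ]
  have hst : s ≠ t := by
    rintro rfl
    exact hc0 (hx.value_eq_zero)
  have hc : 0 < c := (hx.value_nonneg hτ (hl₀.rank_lt hτ hst)).lt_of_ne' hc0
  obtain ⟨l, hl, hpos⟩ := hx.exists_path hτ hc
  have hne : (arcsOf l).toFinset.Nonempty := by
    obtain ⟨l, rfl⟩ := List.head?_eq_some_iff.mp hl.2.1
    cases l with
    | nil => exact absurd (by simpa using hl.2.2.1) hst
    | cons w l => exact ⟨(s, w), by simp⟩
  obtain ⟨e₀, he₀, hmin⟩ := (arcsOf l).toFinset.exists_min_image x hne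
  rw [List.mem_toFinset] at he₀
  set μ := x e₀
  have hx' := hx.sub_smul_pathVec hl hst fun e he => hmin e (List.mem_toFinset.mpr he)
  have hsupp : (Finset.univ.filter fun e => (x - μ • pathVec l) e ≠ 0) ⊂
      Finset.univ.filter fun e => x e ≠ 0 := by
    refine (Finset.ssubset_iff_of_subset fun e => ?_).mpr ⟨e₀, ?_, ?_⟩
    · simp only [Finset.mem_filter, Finset.mem_univ, true_and]
      intro he hxe
      have : e ∉ arcsOf l := fun h => (hpos e h).ne' hxe
      simp [pathVec, this, hxe] at he
    · simpa using (hpos e₀ he₀).ne'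
    · simp [pathVec, he₀, μ]
  have hpath : pathVec l - pathVec l₀ ∈ vectorSpan ℝ (XPath A s t) :=
    vsub_mem_vectorSpan ℝ ⟨l, hl, rfl⟩ ⟨l₀, hl₀, rfl⟩
  convert add_mem (ih _ (hn ▸ Finset.card_lt_card hsupp) hx' rfl) (Submodule.smul_mem _ μ hpath)
    using 1
  module

theorem sub_mem_vectorSpan_XPath (hτ : ∀ e ∈ A, τ e.1 < τ e.2) {x y : (V × V) → ℝ}
    (hx : x ∈ XFlow A s t) (hy : y ∈ XFlow A s t) : x - y ∈ vectorSpan ℝ (XPath A s t) := by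
  rw [mem_XFlow_iff] at hx hy
  obtain ⟨l, hl, -⟩ := hx.exists_path hτ one_pos
  simpa using sub_mem (hx.sub_smul_mem_vectorSpan hτ ⟨l, hl, rfl⟩)
    (hy.sub_smul_mem_vectorSpan hτ ⟨l, hl, rfl⟩)

end Flows

theorem Submodule.exists_separating_finset_card_le_finrank {K ι : Type*} [Field K] [Fintype ι]
    (W : Submodule K (ι → K)) :
    ∃ T : Finset ι, T.card ≤ finrank K W ∧ (∀ i ∈ T, ∃ w ∈ W, w i ≠ 0) ∧
      ∀ w ∈ W, (∀ i ∈ T, w i = 0) → w = 0 := by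
  classical
  induction W using WellFoundedLT.induction with
  | _ W ih =>
  by_cases hW : W = ⊥
  · exact ⟨∅, by simp, by simp, fun w hw _ => by simpa [hW] using hw⟩
  obtain ⟨w₀, hw₀, hne⟩ := Submodule.exists_mem_ne_zero_of_ne_bot hW
  obtain ⟨i₀, hi₀⟩ := Function.ne_iff.mp hne
  let W' := W ⊓ LinearMap.ker (LinearMap.proj i₀ : (ι → K) →ₗ[K] K)
  have hlt : W' < W := lt_of_le_of_ne inf_le_left fun h => hi₀ <| by
    simpa using (Submodule.mem_inf.mp (h.symm ▸ hw₀ : w₀ ∈ W')).2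
  obtain ⟨T, hT, hTsupp, hTsep⟩ := ih W' hlt
  refine ⟨insert i₀ T, ?_, ?_, ?_⟩
  · exact (Finset.card_insert_le _ _).trans
      (Nat.succ_le_of_lt (hT.trans_lt (Submodule.finrank_lt_finrank_of_lt hlt)))
  · intro i hi
    rcases Finset.mem_insert.mp hi with rfl | hi
    · exact ⟨w₀, hw₀, hi₀⟩
    · obtain ⟨w, hw, hwi⟩ := hTsupp i hi
      exact ⟨w, (Submodule.mem_inf.mp hw).1, hwi⟩
  · intro w hw hw0
    refine hTsep w (Submodule.mem_inf.mpr ⟨hw, ?_⟩) fun i hi => hw0 i (Finset.mem_insert_of_mem hi)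
    simpa using hw0 i₀ (Finset.mem_insert_self _ _)

theorem apply_eq_zero_of_mem_vectorSpan_XPath {V : Type*} [DecidableEq V] {A : Set (V × V)}
    {s t : V} {w : (V × V) → ℝ} (hw : w ∈ vectorSpan ℝ (XPath A s t)) {e : V × V}
    (he : e ∉ A) : w e = 0 := by
  rw [vectorSpan_def] at hw
  induction hw using Submodule.span_induction with
  | mem _ h =>
    obtain ⟨_, ⟨l₁, h₁, rfl⟩, _, ⟨l₂, h₂, rfl⟩, rfl⟩ := h
    simp [h₁.pathVec_eq_zero he, h₂.pathVec_eq_zero he]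
  | zero => rfl
  | add _ _ _ _ h₁ h₂ => simp [h₁, h₂]
  | smul a _ _ h => simp [h]

theorem stmt9_general {V : Type*} [Fintype V] [DecidableEq V] (A : Set (V × V)) (s t : V)
    (hacyc : IsAcyclicDigraph A)
    (S S' : Set (V × V))
    (hSid : Identifying (XPath A s t) S)
    (hS'min : ∀ S₂ ⊆ A, Identifying (XFlow A s t) S₂ → S'.ncard ≤ S₂.ncard) :
    S'.ncard ≤ (S.ncard + 1) * S.ncard / 2 := by
  obtain ⟨τ, hτ⟩ := hacyc.exists_rank
  obtain ⟨T, hTcard, hTsupp, hTsep⟩ :=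
    (vectorSpan ℝ (XPath A s t)).exists_separating_finset_card_le_finrank
  have hTA : (T : Set (V × V)) ⊆ A := fun e he => by
    obtain ⟨w, hw, hwe⟩ := hTsupp e he
    by_contra h
    exact hwe (apply_eq_zero_of_mem_vectorSpan_XPath hw h)
  have hTid : Identifying (XFlow A s t) T := fun x hx y hy hne => by
    by_contra! h
    exact hne (sub_eq_zero.mp (hTsep _ (sub_mem_vectorSpan_XPath hτ hx hy)
      fun e he => sub_eq_zero.mpr (h e he)))
  have hrank :=
    finrank_vectorSpan_XPath_le hτ (S := (Set.toFinite S).toFinset) (by simpa using hSid)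
  rw [← Set.ncard_eq_toFinset_card S] at hrank
  calc S'.ncard ≤ T.card := by simpa using hS'min T hTA hTid
    _ ≤ (S.ncard + 1).choose 2 := hTcard.trans hrank
    _ = (S.ncard + 1) * S.ncard / 2 := by rw [Nat.choose_two_right, Nat.add_sub_cancel]

/-- Let `G` be a DAG with arc set `A` and nodes `s, t`.  If `S` is a minimum-cardinality
identifying set for the `s`-`t`-paths and `S'` is a minimum-cardinality identifying set
for the `s`-`t`-flows of value 1, then `|S'| ≤ (|S| + 1)·|S| / 2`. -/
theorem stmt9 {V : Type*} [Fintype V] [DecidableEq V] (A : Set (V × V)) (s t : V)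
    (hacyc : IsAcyclicDigraph A)
    (S S' : Set (V × V)) (hS : S ⊆ A) (hS' : S' ⊆ A)
    (hSid : Identifying (XPath A s t) S)
    (hSmin : ∀ S₂ ⊆ A, Identifying (XPath A s t) S₂ → S.ncard ≤ S₂.ncard)
    (hS'id : Identifying (XFlow A s t) S')
    (hS'min : ∀ S₂ ⊆ A, Identifying (XFlow A s t) S₂ → S'.ncard ≤ S₂.ncard) :
    S'.ncard ≤ (S.ncard + 1) * S.ncard / 2 :=
  stmt9_general A s t hacyc S S' hSid hS'min
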